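/- arXiv:2404.18325 — 9 statements merged into one kernel-verified Lean document; each statement's English description precedes it below -/
import Mathlib

section
/- Every Scott-open filter of a frame is strongly exact: if F is a Scott-open filter of a frame L, M ⊆ F, and the meet ⋀M is strongly exact, then ⋀M ∈ F. -/
/-- A filter of a frame: a nonempty, upward-closed subset closed under binary meets. -/
def IsFrameFilter {L : Type*} [Order.Frame L] (F : Set L) : Prop :=
  F.Nonempty ∧ (∀ x y : L, x ∈ F → x ≤ y → y ∈ F) ∧ (∀ x y : L, x ∈ F → y ∈ F → x ⊓ y ∈ F)

/-- The open sublocale `𝔬(a) = {x | a → x = x}`. -/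
def opn {L : Type*} [Order.Frame L] (a : L) : Set L := {x | a ⇨ x = x}

/-- The meet of `M` is strongly exact if `⋂_{m∈M} 𝔬(m) = 𝔬(⋀M)`. -/
def StronglyExactMeet {L : Type*} [Order.Frame L] (M : Set L) : Prop :=
  (⋂ m ∈ M, opn m) = opn (sInf M)

/-- The meet of `M` is exact if `(⋀M) ∨ b = ⋀_{m∈M}(m ∨ b)` for every `b`. -/
def ExactMeet {L : Type*} [Order.Frame L] (M : Set L) : Prop :=
  ∀ b : L, sInf M ⊔ b = ⨅ m ∈ M, (m ⊔ b)

/-- A strongly exact filter. -/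
def IsStronglyExactFilter {L : Type*} [Order.Frame L] (F : Set L) : Prop :=
  IsFrameFilter F ∧ ∀ M ⊆ F, StronglyExactMeet M → sInf M ∈ F

/-- An exact filter. -/
def IsExactFilter {L : Type*} [Order.Frame L] (F : Set L) : Prop :=
  IsFrameFilter F ∧ ∀ M ⊆ F, ExactMeet M → sInf M ∈ F

/-- A Scott-open filter. -/
def IsScottOpenFilter {L : Type*} [Order.Frame L] (F : Set L) : Prop :=
  IsFrameFilter F ∧
    ∀ D : Set L, D.Nonempty → DirectedOn (· ≤ ·) D → sSup D ∈ F → ∃ d ∈ D, d ∈ F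

/-- A completely prime filter: a proper filter such that `⋁A ∈ F` implies `a ∈ F`
for some `a ∈ A`. -/
def IsCompletelyPrimeFilter {L : Type*} [Order.Frame L] (F : Set L) : Prop :=
  IsFrameFilter F ∧ F ≠ Set.univ ∧ ∀ A : Set L, sSup A ∈ F → ∃ a ∈ A, a ∈ F

/-- The closed filter `𝔠f(a) = {x | x ∨ a = 1}`. -/
def closedFilter {L : Type*} [Order.Frame L] (a : L) : Set L := {x | x ⊔ a = ⊤}

/-- A regular filter: one of the form `{x | ∀ b ∈ F, x ∨ b = 1}` for some filter `F`. -/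
def IsRegularFilter {L : Type*} [Order.Frame L] (G : Set L) : Prop :=
  ∃ F : Set L, IsFrameFilter F ∧ G = {x : L | ∀ b ∈ F, x ⊔ b = ⊤}

/-- Subfitness of a frame. -/
def Subfit (L : Type*) [Order.Frame L] : Prop :=
  ∀ a b : L, (∀ c : L, a ⊔ c = ⊤ → b ⊔ c = ⊤) → a ≤ b

/-- A sublocale: a subset closed under all meets and under `a → (-)` for all `a`. -/
def IsSublocale {L : Type*} [Order.Frame L] (S : Set L) : Prop :=
  (∀ A ⊆ S, sInf A ∈ S) ∧ ∀ a : L, ∀ s ∈ S, (a ⇨ s) ∈ S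

/-- The fitting of a sublocale: intersection of the open sublocales above it. -/
def fitSl {L : Type*} [Order.Frame L] (S : Set L) : Set L :=
  ⋂ a ∈ {a : L | S ⊆ opn a}, opn a

/-- The sublocale `⋂_{a∈F} 𝔬(a)` associated to a filter `F`. -/
def fts {L : Type*} [Order.Frame L] (F : Set L) : Set L := ⋂ a ∈ F, opn a

/-- The filter `{a | S ⊆ 𝔬(a)}` associated to a sublocale `S`. -/
def stf {L : Type*} [Order.Frame L] (S : Set L) : Set L := {a : L | S ⊆ opn a}

/-! If `⋀M ∉ F`, Zorn's lemma (chains have their joins outside `F` by Scott-openness) gives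
an element `y ≥ ⋀M` maximal outside `F`. For `m ∈ M ⊆ F` the element `m → y` again lies
outside `F`, since `m ∧ (m → y) ≤ y`; maximality forces `m → y = y`. Thus
`y ∈ ⋂_{m∈M} 𝔬(m) = 𝔬(⋀M)`, and `⋀M ≤ y` gives `y = ⋀M → y = 1 ∈ F`, a contradiction. -/

theorem exists_le_maximal_notMem {α : Type*} [CompleteLattice α] {F : Set α}
    (hF : ∀ D : Set α, D.Nonempty → DirectedOn (· ≤ ·) D → sSup D ∈ F → ∃ d ∈ D, d ∈ F)
    {a : α} (ha : a ∉ F) : ∃ y, a ≤ y ∧ Maximal (· ∉ F) y := by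
  refine zorn_le_nonempty₀ Fᶜ
    (fun c hcF hc y hy => ⟨sSup c, fun hsup => ?_, fun _ => le_sSup⟩) a ha
  obtain ⟨d, hdc, hdF⟩ := hF c ⟨y, hy⟩ hc.directedOn hsup
  exact hcF hdc hdF

theorem himp_eq_of_maximal_notMem {α : Type*} [GeneralizedHeytingAlgebra α] {F : Set α}
    {m y : α} (hmp : m ⇨ y ∈ F → y ∈ F) (hy : Maximal (· ∉ F) y) : m ⇨ y = y :=
  (hy.2 (fun h => hy.1 (hmp h)) le_himp).antisymm le_himp

theorem IsFrameFilter.mem_of_himp_mem {L : Type*} [Order.Frame L] {F : Set L}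
    (hF : IsFrameFilter F) {m y : L} (hm : m ∈ F) (hmy : m ⇨ y ∈ F) : y ∈ F :=
  hF.2.1 _ _ (hF.2.2 _ _ hm hmy) inf_himp_le

theorem IsFrameFilter.top_mem {L : Type*} [Order.Frame L] {F : Set L} (hF : IsFrameFilter F) :
    ⊤ ∈ F :=
  let ⟨_, hx⟩ := hF.1
  hF.2.1 _ _ hx le_top

theorem eq_top_of_mem_opn_of_le {L : Type*} [Order.Frame L] {a y : L} (hy : y ∈ opn a)
    (hay : a ≤ y) : y = ⊤ :=
  (hy : a ⇨ y = y) ▸ himp_eq_top_iff.2 hay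

theorem stmt1 {L : Type*} [Order.Frame L] (F : Set L) (hF : IsScottOpenFilter F)
    (M : Set L) (hM : M ⊆ F) (hse : StronglyExactMeet M) :
    sInf M ∈ F := by
  by_contra hMF
  obtain ⟨y, hMy, hy⟩ := exists_le_maximal_notMem hF.2 hMF
  have hy_opn : y ∈ ⋂ m ∈ M, opn m := Set.mem_iInter₂.2 fun m hm =>
    himp_eq_of_maximal_notMem (hF.1.mem_of_himp_mem (hM hm)) hy
  rw [hse] at hy_opn
  exact hy.1 (eq_top_of_mem_opn_of_le hy_opn hMy ▸ hF.1.top_mem)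
end

section
/- Completely prime filters are completely join-prime in the lattice of filters: if Q is a completely prime filter of a frame L and {F_i}_{i∈I} is a family of filters of L with ⋂_{i∈I} F_i ⊆ Q, then F_i ⊆ Q for some i ∈ I. -/
theorem stmt3 {L : Type*} [Order.Frame L] (Q : Set L) (hQ : IsCompletelyPrimeFilter Q)
    {ι : Type*} (F : ι → Set L) (hF : ∀ i, IsFrameFilter (F i))
    (h : (⋂ i, F i) ⊆ Q) :
    ∃ i, F i ⊆ Q := by
  obtain ⟨⟨hne, hup, hmeet⟩, hproper, hcp⟩ := hQ
  by_contra hc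
  push_neg at hc
  set p := sSup {a : L | a ∉ Q} with hp
  have hpQ : p ∉ Q := fun hpm => by
    obtain ⟨a, ha, haQ⟩ := hcp _ hpm
    exact ha haQ
  have hmem : p ∈ ⋂ i, F i := by
    simp only [Set.mem_iInter]
    intro i
    obtain ⟨a, haF, haQ⟩ := Set.not_subset.mp (hc i)
    exact (hF i).2.1 a p haF (le_sSup haQ)
  exact hpQ (h hmem)
end

section
/- A filter F of a frame L is exact if and only if F = {a ∈ L | ∀x, y ∈ L, (∀f ∈ F, y ≤ f ∨ x) ⇒ y ≤ a ∨ x}; equivalently, F is exact if and only if F is an intersection of filters of the form {a ∈ L | y ≤ a ∨ x} with x, y ∈ L. -/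
theorem stmt5 {L : Type*} [Order.Frame L] (F : Set L) (hF : IsFrameFilter F) :
    (IsExactFilter F ↔
      F = {a : L | ∀ x y : L, (∀ f ∈ F, y ≤ f ⊔ x) → y ≤ a ⊔ x}) ∧
    (IsExactFilter F ↔
      ∃ P : Set (L × L), F = ⋂ p ∈ P, {a : L | p.2 ≤ a ⊔ p.1}) := by
  -- If F is exact, the "saturation" G is contained in F.
  have hGsub : IsExactFilter F →
      {a : L | ∀ x y : L, (∀ f ∈ F, y ≤ f ⊔ x) → y ≤ a ⊔ x} ⊆ F := by
    rintro ⟨_, hex⟩ a ha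
    set M : Set L := (fun f => f ⊔ a) '' F with hM
    have hMF : M ⊆ F := by
      rintro _ ⟨f, hf, rfl⟩
      exact hF.2.1 f (f ⊔ a) hf le_sup_left
    have key : ∀ b : L, (⨅ f ∈ F, (f ⊔ b)) ≤ a ⊔ b := fun b =>
      ha b _ (fun f hf => iInf₂_le f hf)
    have haM : a ≤ sInf M := le_sInf (by rintro _ ⟨f, hf, rfl⟩; exact le_sup_right)
    have hupper : ∀ b : L, (⨅ m ∈ M, (m ⊔ b)) ≤ a ⊔ b := by
      intro b
      have h1 : (⨅ m ∈ M, (m ⊔ b)) ≤ ⨅ f ∈ F, (f ⊔ (a ⊔ b)) := by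
        refine le_iInf₂ fun f hf => ?_
        calc (⨅ m ∈ M, (m ⊔ b)) ≤ (f ⊔ a) ⊔ b := iInf₂_le (f ⊔ a) ⟨f, hf, rfl⟩
          _ = f ⊔ (a ⊔ b) := sup_assoc ..
      calc (⨅ m ∈ M, (m ⊔ b)) ≤ ⨅ f ∈ F, (f ⊔ (a ⊔ b)) := h1
        _ ≤ a ⊔ (a ⊔ b) := key (a ⊔ b)
        _ = a ⊔ b := by rw [← sup_assoc, sup_idem]
    have hexM : ExactMeet M := by
      intro b
      apply le_antisymm
      · exact le_iInf₂ fun m hm => sup_le_sup_right (sInf_le hm) b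
      · exact le_trans (hupper b) (sup_le_sup_right haM b)
    have hmem : sInf M ∈ F := hex M hMF hexM
    have heq : sInf M = a := by
      refine le_antisymm ?_ haM
      calc sInf M = sInf M ⊔ ⊥ := (sup_bot_eq _).symm
        _ = ⨅ m ∈ M, (m ⊔ ⊥) := hexM ⊥
        _ ≤ a ⊔ ⊥ := hupper ⊥
        _ = a := sup_bot_eq _
    rwa [heq] at hmem
  -- Any intersection of filters of the given form is exact.
  have hInter : ∀ P : Set (L × L),
      F = (⋂ p ∈ P, {a : L | p.2 ≤ a ⊔ p.1}) → IsExactFilter F := by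
    intro P hP
    refine ⟨hF, fun M hMF hexM => ?_⟩
    rw [hP]
    refine Set.mem_iInter₂.2 fun p hp => ?_
    have hm : ∀ m ∈ M, p.2 ≤ m ⊔ p.1 := fun m hmM => by
      have h := hMF hmM; rw [hP] at h
      exact Set.mem_iInter₂.1 h p hp
    show p.2 ≤ sInf M ⊔ p.1
    rw [hexM p.1]
    exact le_iInf₂ hm
  -- G equals the canonical intersection.
  have hGeq : (⋂ p ∈ {p : L × L | ∀ f ∈ F, p.2 ≤ f ⊔ p.1}, {a : L | p.2 ≤ a ⊔ p.1}) =
      {a : L | ∀ x y : L, (∀ f ∈ F, y ≤ f ⊔ x) → y ≤ a ⊔ x} := by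
    ext a
    simp only [Set.mem_iInter₂, Set.mem_setOf_eq]
    exact ⟨fun h x y hy => h (x, y) hy, fun h p hp => h p.1 p.2 hp⟩
  have hIff1 : IsExactFilter F ↔
      F = {a : L | ∀ x y : L, (∀ f ∈ F, y ≤ f ⊔ x) → y ≤ a ⊔ x} := by
    constructor
    · intro hE
      exact Set.Subset.antisymm (fun a haF x y h => h a haF) (hGsub hE)
    · intro hFG
      exact hInter {p : L × L | ∀ f ∈ F, p.2 ≤ f ⊔ p.1} (by rw [hGeq]; exact hFG)
  refine ⟨hIff1, ?_, ?_⟩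
  · intro hE
    exact ⟨{p : L × L | ∀ f ∈ F, p.2 ≤ f ⊔ p.1}, by rw [hGeq]; exact hIff1.1 hE⟩
  · rintro ⟨P, hP⟩
    exact hInter P hP
end

section
/- Let L be a frame, F a filter of L, c ∈ L, and set F ∖ c = {x ∈ L | x ∨ c ∈ F}. Then: if F is a closed filter then F ∖ c is a closed filter; if F is Scott-open then F ∖ c is Scott-open; if F is completely prime and c ∉ F then F ∖ c is completely prime; if F is exact then F ∖ c is exact; and if F is strongly exact then F ∖ c is strongly exact. -/
section Aux
variable {L : Type*} [Order.Frame L]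

lemma opn_mono' {a b : L} (h : a ≤ b) : opn a ⊆ opn b := fun x hx => by
  have hx' : a ⇨ x = x := hx
  exact le_antisymm ((himp_le_himp_right h).trans (le_of_eq hx')) le_himp

lemma le_of_opn_subset' {a b : L} (h : opn a ⊆ opn b) : a ≤ b := by
  have h1 : (a ⇨ b) ∈ opn a := by
    show a ⇨ (a ⇨ b) = a ⇨ b
    rw [himp_himp, inf_idem]
  have h2 : b ⇨ (a ⇨ b) = a ⇨ b := h h1
  have h3 : b ⇨ (a ⇨ b) = ⊤ := himp_eq_top_iff.mpr le_himp
  rw [h3] at h2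
  exact himp_eq_top_iff.mp h2.symm

lemma se_sup' {M : Set L} {c : L} (hM : StronglyExactMeet M) :
    (⋂ m ∈ M, opn (m ⊔ c)) = opn (sInf M ⊔ c) := by
  apply Set.Subset.antisymm
  · intro x hx
    have hx' : ∀ m ∈ M, (m ⊔ c) ⇨ x = x := fun m hm => Set.mem_iInter₂.mp hx m hm
    have hz : ∀ m ∈ M, m ⇨ ((c ⇨ x) ⇨ x) = (c ⇨ x) ⇨ x := by
      intro m hm
      refine le_antisymm ?_ le_himp
      rw [le_himp_iff]
      have h1 : m ⇨ (c ⇨ x) ⇨ x = (c ⇨ x) ⇨ (m ⇨ x) := by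
        rw [himp_himp, himp_himp, inf_comm]
      calc (m ⇨ (c ⇨ x) ⇨ x) ⊓ (c ⇨ x)
          = ((c ⇨ x) ⇨ (m ⇨ x)) ⊓ (c ⇨ x) := by rw [h1]
        _ ≤ (m ⇨ x) ⊓ (c ⇨ x) := le_inf himp_inf_le inf_le_right
        _ = (m ⊔ c) ⇨ x := (sup_himp_distrib m c x).symm
        _ = x := hx' m hm
    have hmem : (c ⇨ x) ⇨ x ∈ ⋂ m ∈ M, opn m := Set.mem_iInter₂.mpr hz
    rw [hM] at hmem
    have hmem' : sInf M ⇨ ((c ⇨ x) ⇨ x) = (c ⇨ x) ⇨ x := hmem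
    show (sInf M ⊔ c) ⇨ x = x
    refine le_antisymm ?_ le_himp
    rw [sup_himp_distrib]
    have h2 : sInf M ⇨ x ≤ (c ⇨ x) ⇨ x := by
      calc sInf M ⇨ x ≤ sInf M ⇨ ((c ⇨ x) ⇨ x) := himp_le_himp_left le_himp
        _ = (c ⇨ x) ⇨ x := hmem'
    calc (sInf M ⇨ x) ⊓ (c ⇨ x) ≤ ((c ⇨ x) ⇨ x) ⊓ (c ⇨ x) := inf_le_inf_right _ h2
      _ ≤ x := himp_inf_le
  · apply Set.subset_iInter₂
    intro m hm
    exact opn_mono' (sup_le_sup_right (sInf_le hm) c)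

lemma se_sInf_sup' {M : Set L} {c : L} (hM : StronglyExactMeet M) :
    sInf ((fun m => m ⊔ c) '' M) = sInf M ⊔ c := by
  refine le_antisymm ?_ ?_
  · apply le_of_opn_subset'
    rw [← se_sup' hM]
    apply Set.subset_iInter₂
    intro m hm
    exact opn_mono' (sInf_le ⟨m, hm, rfl⟩)
  · apply le_sInf
    rintro _ ⟨m, hm, rfl⟩
    exact sup_le_sup_right (sInf_le hm) c

lemma se_image' {M : Set L} {c : L} (hM : StronglyExactMeet M) :
    StronglyExactMeet ((fun m => m ⊔ c) '' M) := by
  unfold StronglyExactMeet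
  rw [Set.biInter_image, se_sInf_sup' hM, se_sup' hM]

lemma filter_div' {F : Set L} (hF : IsFrameFilter F) (c : L) :
    IsFrameFilter {x : L | x ⊔ c ∈ F} := by
  obtain ⟨⟨w, hw⟩, hup, hinf⟩ := hF
  refine ⟨⟨w, hup w (w ⊔ c) hw le_sup_left⟩, ?_, ?_⟩
  · intro x y hx hxy
    exact hup _ _ hx (sup_le_sup_right hxy c)
  · intro x y hx hy
    show (x ⊓ y) ⊔ c ∈ F
    rw [sup_inf_right]
    exact hinf _ _ hx hy

end Aux


theorem stmt7 {L : Type*} [Order.Frame L] (F : Set L) (hF : IsFrameFilter F) (c : L) :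
    ((∃ a : L, F = closedFilter a) → ∃ a : L, {x : L | x ⊔ c ∈ F} = closedFilter a) ∧
    (IsScottOpenFilter F → IsScottOpenFilter {x : L | x ⊔ c ∈ F}) ∧
    (IsCompletelyPrimeFilter F → c ∉ F → IsCompletelyPrimeFilter {x : L | x ⊔ c ∈ F}) ∧
    (IsExactFilter F → IsExactFilter {x : L | x ⊔ c ∈ F}) ∧
    (IsStronglyExactFilter F → IsStronglyExactFilter {x : L | x ⊔ c ∈ F}) := by
  refine ⟨?_, ?_, ?_, ?_, ?_⟩
  · rintro ⟨a, rfl⟩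
    exact ⟨c ⊔ a, by ext x; simp [closedFilter, sup_assoc]⟩
  · rintro ⟨hFf, hS⟩
    refine ⟨filter_div' hFf c, ?_⟩
    intro D hD hdir hsup
    have hD' : ((fun d => d ⊔ c) '' D).Nonempty := hD.image _
    have hdir' : DirectedOn (· ≤ ·) ((fun d => d ⊔ c) '' D) := by
      rintro _ ⟨x, hx, rfl⟩ _ ⟨y, hy, rfl⟩
      obtain ⟨z, hz, hxz, hyz⟩ := hdir x hx y hy
      exact ⟨z ⊔ c, ⟨z, hz, rfl⟩, sup_le_sup_right hxz c, sup_le_sup_right hyz c⟩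
    have hsup' : sSup ((fun d => d ⊔ c) '' D) ∈ F := by
      have h1 : sSup ((fun d => d ⊔ c) '' D) = sSup D ⊔ c := by
        rw [sSup_image]
        apply le_antisymm
        · simp only [iSup_le_iff]
          exact fun d hd => sup_le_sup_right (le_sSup hd) c
        · obtain ⟨d₀, hd₀⟩ := hD
          refine sup_le (sSup_le fun d hd => le_sup_left.trans (le_iSup₂_of_le d hd le_rfl))
            (le_sup_right.trans (le_iSup₂_of_le d₀ hd₀ le_rfl))
      rw [h1]; exact hsup
    obtain ⟨_, ⟨d, hd, rfl⟩, hdF⟩ := hS _ hD' hdir' hsup'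
    exact ⟨d, hd, hdF⟩
  · rintro ⟨hFf, hprop, hcp⟩ hc
    refine ⟨filter_div' hFf c, ?_, ?_⟩
    · intro h
      apply hc
      have : (⊥ : L) ∈ {x : L | x ⊔ c ∈ F} := h ▸ Set.mem_univ _
      simpa using this
    · intro A hA
      have hA' : sSup (A ∪ {c}) ∈ F := by
        rw [sSup_union, sSup_singleton]; exact hA
      obtain ⟨a, ha, haF⟩ := hcp _ hA'
      rcases ha with ha | ha
      · exact ⟨a, ha, hFf.2.1 a (a ⊔ c) haF le_sup_left⟩
      · exact absurd (Set.mem_singleton_iff.mp ha ▸ haF) hc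
  · rintro ⟨hFf, hE⟩
    refine ⟨filter_div' hFf c, ?_⟩
    intro M hM hexact
    have hsub : (fun m => m ⊔ c) '' M ⊆ F := by
      rintro _ ⟨m, hm, rfl⟩; exact hM hm
    have hinf_img : sInf ((fun m => m ⊔ c) '' M) = sInf M ⊔ c := by
      rw [sInf_image]; exact (hexact c).symm
    have hexact' : ExactMeet ((fun m => m ⊔ c) '' M) := by
      intro b
      rw [hinf_img, sup_assoc, hexact (c ⊔ b), iInf_image]
      simp [sup_assoc]
    have := hE _ hsub hexact'
    rw [hinf_img] at this
    exact this
  · rintro ⟨hFf, hE⟩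
    refine ⟨filter_div' hFf c, ?_⟩
    intro M hM hse
    have hsub : (fun m => m ⊔ c) '' M ⊆ F := by
      rintro _ ⟨m, hm, rfl⟩; exact hM hm
    have := hE _ hsub (se_image' hse)
    rw [se_sInf_sup' hse] at this
    exact this
end

section
/- Let L be a frame and F a collection of filters of L such that {x ∈ L | x ∨ a ∈ F} ∈ F for every F ∈ F and a ∈ L. Let Int(F) = {⋂A | A ⊆ F} (with ⋂∅ = L). Then for every S ∈ Int(F) and every filter G of L, the filter {a ∈ L | ∀b ∈ G, a ∨ b ∈ S} belongs to Int(F); hence Int(F) is a subcolocale of the coframe of all filters of L ordered by reverse inclusion. -/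
theorem stmt9 {L : Type*} [Order.Frame L] (𝒻 : Set (Set L))
    (hfil : ∀ F ∈ 𝒻, IsFrameFilter F)
    (h : ∀ F ∈ 𝒻, ∀ a : L, {x : L | x ⊔ a ∈ F} ∈ 𝒻) :
    let Int𝒻 : Set (Set L) := {S | ∃ A ⊆ 𝒻, S = ⋂₀ A}
    (∀ S ∈ Int𝒻, ∀ G : Set L, IsFrameFilter G →
      {a : L | ∀ b ∈ G, a ⊔ b ∈ S} ∈ Int𝒻) ∧
    (∀ 𝒜 ⊆ Int𝒻, ⋂₀ 𝒜 ∈ Int𝒻) := by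
  intro Int𝒻
  constructor
  · rintro S ⟨A, hA, rfl⟩ G hG
    refine ⟨{T | ∃ F ∈ A, ∃ b ∈ G, T = {x : L | x ⊔ b ∈ F}}, ?_, ?_⟩
    · rintro T ⟨F, hF, b, _, rfl⟩
      exact h F (hA hF) b
    · ext a
      simp only [Set.mem_setOf_eq, Set.mem_sInter]
      constructor
      · rintro ha T ⟨F, hF, b, hb, rfl⟩
        exact ha b hb F hF
      · intro ha b hb F hF
        exact ha _ ⟨F, hF, b, hb, rfl⟩
  · intro 𝒜 h𝒜
    refine ⟨{F | F ∈ 𝒻 ∧ ⋂₀ 𝒜 ⊆ F}, fun F hF => hF.1, ?_⟩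
    apply Set.Subset.antisymm
    · intro x hx F hF
      exact hF.2 hx
    · intro x hx S hS
      obtain ⟨A, hA, rfl⟩ := h𝒜 hS
      intro F hF
      exact hx F ⟨hA hF, fun y hy => hy _ hS F hF⟩
end

section
/- A frame L is subfit if and only if every exact filter of L is regular, i.e., every exact filter is an intersection of closed filters 𝔠f(a) = {x ∈ L | x ∨ a = 1}. -/
theorem stmt11 {L : Type*} [Order.Frame L] :
    Subfit L ↔
      ∀ F : Set L, IsExactFilter F → ∃ A : Set L, F = ⋂ a ∈ A, closedFilter a := by
  constructor
  · intro hsub F hF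
    obtain ⟨⟨hne, hup, hmeet⟩, hex⟩ := hF
    refine ⟨{a | ∀ x ∈ F, x ⊔ a = ⊤}, ?_⟩
    apply Set.Subset.antisymm
    · intro x hx
      simp only [Set.mem_iInter, Set.mem_setOf_eq, closedFilter]
      intro a ha
      exact ha x hx
    · intro y hy
      simp only [Set.mem_iInter, Set.mem_setOf_eq, closedFilter] at hy
      set M : Set L := (fun x => x ⊔ y) '' F with hMdef
      have hMF : M ⊆ F := by
        rintro m ⟨x, hx, rfl⟩
        exact hup x (x ⊔ y) hx le_sup_left
      have hyInf : y ≤ sInf M := by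
        apply le_sInf
        rintro m ⟨x, hx, rfl⟩
        exact le_sup_right
      have hexM : ExactMeet M := by
        intro b
        apply le_antisymm
        · exact le_iInf₂ fun m hm => sup_le_sup_right (sInf_le hm) b
        · apply hsub
          intro c hc
          have hA : ∀ x ∈ F, x ⊔ (y ⊔ b ⊔ c) = ⊤ := by
            intro x hx
            have h1 : (x ⊔ y ⊔ b) ⊔ c = ⊤ := by
              refine top_le_iff.mp ?_
              rw [← hc]
              exact sup_le_sup_right (iInf₂_le (x ⊔ y) (Set.mem_image_of_mem (fun z => z ⊔ y) hx)) c
            rw [← h1]; ac_rfl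
          have h2 := hy (y ⊔ b ⊔ c) hA
          have hyc : y ⊔ b ⊔ c = ⊤ := by
            rw [← h2]; ac_rfl
          have : y ⊔ b ⊔ c ≤ (sInf M ⊔ b) ⊔ c := by
            rw [sup_assoc, sup_assoc]
            exact sup_le_sup_right hyInf _
          rw [hyc] at this
          exact top_le_iff.mp this
      have hInfF : sInf M ∈ F := hex M hMF hexM
      have hle : sInf M ≤ y := by
        apply hsub
        intro c hc
        have hA : ∀ x ∈ F, x ⊔ (y ⊔ c) = ⊤ := by
          intro x hx
          have h1 : (x ⊔ y) ⊔ c = ⊤ := by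
            refine top_le_iff.mp ?_
            rw [← hc]
            exact sup_le_sup_right (sInf_le (Set.mem_image_of_mem (fun z => z ⊔ y) hx)) c
          rw [← h1]; ac_rfl
        have h2 := hy (y ⊔ c) hA
        rw [← sup_assoc, sup_idem] at h2
        exact h2
      exact hup (sInf M) y hInfF hle
  · intro h a b hab
    have hIci : IsExactFilter (Set.Ici a) := by
      refine ⟨⟨⟨a, le_refl a⟩, fun x y hx hxy => le_trans hx hxy,
        fun x y hx hy => le_inf hx hy⟩, fun M hM _ => le_sInf hM⟩
    obtain ⟨A, hA⟩ := h (Set.Ici a) hIci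
    have hb : b ∈ Set.Ici a := by
      rw [hA]
      simp only [Set.mem_iInter, closedFilter, Set.mem_setOf_eq]
      intro c hc
      have hac : a ⊔ c = ⊤ := by
        have : a ∈ Set.Ici a := le_refl a
        rw [hA] at this
        simp only [Set.mem_iInter, closedFilter, Set.mem_setOf_eq] at this
        exact this c hc
      exact hab c hac
    exact hb
end

section
/- A frame L is subfit if and only if for every a ∈ L, {b ∈ L | ∀x ∈ L, (x ∨ a = 1 ⇒ b ∨ x = 1)} = ↑a; that is, the supplement of the closed filter 𝔠f(a) in the coframe of filters equals the principal filter ↑a. -/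
theorem stmt12 {L : Type*} [Order.Frame L] :
    Subfit L ↔
      ∀ a : L, {b : L | ∀ x : L, x ⊔ a = ⊤ → b ⊔ x = ⊤} = Set.Ici a := by
  constructor
  · intro hs a
    ext b
    constructor
    · intro hb
      exact hs a b fun c hc => hb c (by rw [sup_comm]; exact hc)
    · intro hb x hx
      have : a ⊔ x = ⊤ := by rw [sup_comm]; exact hx
      exact top_le_iff.mp (this ▸ sup_le_sup_right hb x)
  · intro h a b hab
    have : b ∈ ({c : L | ∀ x : L, x ⊔ a = ⊤ → c ⊔ x = ⊤} : Set L) := by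
      intro x hx
      exact hab x (by rw [sup_comm]; exact hx)
    rw [h a] at this
    exact this
end

section
/- Let L be a frame and S = ⋂_{m∈M} 𝔬(m) for some M ⊆ L (a fitted sublocale). Then (i) the set stf(S) = {a ∈ L | S ⊆ 𝔬(a)} is a strongly exact filter of L, and (ii) ⋂_{a ∈ stf(S)} 𝔬(a) = S. -/
theorem stmt13 {L : Type*} [Order.Frame L] (M : Set L) :
    IsStronglyExactFilter (stf (⋂ m ∈ M, opn m)) ∧
    (⋂ a ∈ stf (⋂ m ∈ M, opn m), opn a) = ⋂ m ∈ M, opn m := by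
  set S := ⋂ m ∈ M, opn m with hS
  have hmono : ∀ {x y : L}, x ≤ y → opn x ⊆ opn y := by
    intro x y hxy s hs
    have h1 : y ⇨ s ≤ x ⇨ s := himp_le_himp_right hxy
    have h2 : s ≤ y ⇨ s := le_himp_iff.mpr (by exact inf_le_left)
    exact le_antisymm (h1.trans hs.le) h2
  refine ⟨⟨⟨⟨⊤, ?_⟩, ?_, ?_⟩, ?_⟩, ?_⟩
  · intro s _
    simp [opn]
  · intro x y hx hxy
    exact fun s hs => hmono hxy (hx hs)
  · intro x y hx hy s hs
    have h1 : x ⇨ s = s := hx hs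
    have h2 : y ⇨ s = s := hy hs
    show (x ⊓ y) ⇨ s = s
    rw [← himp_himp, h2, h1]
  · intro N hN hse
    intro s hs
    have : s ∈ ⋂ n ∈ N, opn n := by
      exact Set.mem_iInter₂.mpr fun n hn => hN hn hs
    rw [hse] at this
    exact this
  · apply Set.Subset.antisymm
    · intro s hs
      refine Set.mem_iInter₂.mpr fun m hm => ?_
      have hmem : m ∈ stf S := fun t ht => Set.mem_iInter₂.mp ht m hm
      exact Set.mem_iInter₂.mp hs m hmem
    · intro s hs
      exact Set.mem_iInter₂.mpr fun a ha => ha hs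
end

section
/- Let L be a frame. The order isomorphism F ↦ ⋂_{a∈F} 𝔬(a) between strongly exact filters (ordered by reverse inclusion) and fitted sublocales (ordered by inclusion) restricts to a pair of mutually inverse order isomorphisms between the set of regular filters of L and the set of sublocales of the form fit(⋁_{i∈I} 𝔠(a_i)) for some family (a_i)_{i∈I} in L, i.e., fittings of joins of closed sublocales. -/
lemma mem_opn_of_sup_top {L : Type*} [Order.Frame L] {a x : L} (h : a ⊔ x = ⊤) : x ∈ opn a := by
  refine le_antisymm ?_ le_himp
  calc a ⇨ x = (a ⇨ x) ⊓ (a ⊔ x) := by rw [h, inf_top_eq]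
    _ = ((a ⇨ x) ⊓ a) ⊔ ((a ⇨ x) ⊓ x) := inf_sup_left _ _ _
    _ ≤ x := sup_le himp_inf_le inf_le_right

lemma sInf_mem_opn {L : Type*} [Order.Frame L] {a : L} {B : Set L} (h : B ⊆ opn a) :
    sInf B ∈ opn a := by
  refine le_antisymm (le_sInf fun b hb => ?_) le_himp
  calc a ⇨ sInf B ≤ a ⇨ b := himp_le_himp_left (sInf_le hb)
    _ = b := h hb

lemma stf_S {L : Type*} [Order.Frame L] (A : Set L) :
    stf {x : L | ∃ B ⊆ ⋃ a ∈ A, Set.Ici a, x = sInf B} = {x : L | ∀ a ∈ A, x ⊔ a = ⊤} := by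
  ext x
  constructor
  · intro hx a ha
    have hmem : x ⊔ a ∈ {x : L | ∃ B ⊆ ⋃ a ∈ A, Set.Ici a, x = sInf B} := by
      refine ⟨{x ⊔ a}, ?_, sInf_singleton.symm⟩
      intro y hy
      simp only [Set.mem_singleton_iff] at hy
      subst hy
      exact Set.mem_biUnion ha le_sup_right
    have h1 : x ⇨ (x ⊔ a) = x ⊔ a := hx hmem
    have h2 : x ⇨ (x ⊔ a) = ⊤ := himp_eq_top_iff.mpr le_sup_left
    rw [h2] at h1
    exact h1.symm
  · rintro hx y ⟨B, hB, rfl⟩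
    apply sInf_mem_opn
    intro b hb
    obtain ⟨a, ha, hab⟩ : ∃ a ∈ A, a ≤ b := by simpa using hB hb
    refine mem_opn_of_sup_top (top_le_iff.mp ?_)
    calc (⊤ : L) = x ⊔ a := (hx a ha).symm
      _ ≤ x ⊔ b := sup_le_sup_left hab x

lemma subset_fitSl {L : Type*} [Order.Frame L] (S : Set L) : S ⊆ fitSl S :=
  fun x hx => Set.mem_iInter₂.mpr fun _ ha => ha hx

lemma stf_fitSl {L : Type*} [Order.Frame L] (S : Set L) : stf (fitSl S) = stf S := by
  ext a
  exact ⟨fun h => (subset_fitSl S).trans h, fun h => Set.biInter_subset_of_mem h⟩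

lemma sup_finset_inf_top {L : Type*} [Order.Frame L] {A : Set L} {x : L}
    (hx : ∀ a ∈ A, x ⊔ a = ⊤) (B : Finset L) (hB : ↑B ⊆ A) : x ⊔ B.inf id = ⊤ := by
  classical
  induction B using Finset.induction_on with
  | empty => simp
  | @insert a B _ ih =>
    rw [Finset.inf_insert, sup_inf_left]
    simp only [id_eq]
    rw [hx a (hB (Finset.mem_insert_self a B)),
      ih (fun y hy => hB (Finset.mem_insert_of_mem hy))]
    simp

lemma regular_of_A {L : Type*} [Order.Frame L] (A : Set L) :
    IsRegularFilter {x : L | ∀ a ∈ A, x ⊔ a = ⊤} := by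
  classical
  refine ⟨{b | ∃ B : Finset L, ↑B ⊆ A ∧ B.inf id ≤ b}, ⟨⟨⊤, ∅, by simp⟩, ?_, ?_⟩, ?_⟩
  · rintro x y ⟨B, hB, hx⟩ hxy; exact ⟨B, hB, hx.trans hxy⟩
  · rintro x y ⟨B1, h1, hx⟩ ⟨B2, h2, hy⟩
    refine ⟨B1 ∪ B2, by simp [Set.union_subset_iff, h1, h2], ?_⟩
    rw [Finset.inf_union]
    exact inf_le_inf hx hy
  · ext x
    simp only [Set.mem_setOf_eq]
    constructor
    · rintro hx b ⟨B, hB, hb⟩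
      exact top_le_iff.mp ((sup_finset_inf_top hx B hB).symm.le.trans (sup_le_sup_left hb x))
    · intro hx a ha
      exact hx a ⟨{a}, by simpa, by simp⟩


/-- The isomorphism `F ↦ ⋂_{a∈F} 𝔬(a)` between strongly exact filters (reverse inclusion)
and fitted sublocales (inclusion) restricts to a pair of mutually inverse order
isomorphisms between regular filters and fittings of joins of closed sublocales. -/
theorem stmt16 {L : Type*} [Order.Frame L] :
    let FitSc : Set (Set L) :=
      {T | ∃ A : Set L, T = fitSl {x : L | ∃ B ⊆ ⋃ a ∈ A, Set.Ici a, x = sInf B}}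
    (∀ G : Set L, IsRegularFilter G → fts G ∈ FitSc) ∧
    (∀ T ∈ FitSc, IsRegularFilter (stf T)) ∧
    (∀ G : Set L, IsRegularFilter G → stf (fts G) = G) ∧
    (∀ T ∈ FitSc, fts (stf T) = T) ∧
    (∀ G G' : Set L, IsRegularFilter G → IsRegularFilter G' →
      (G' ⊆ G ↔ fts G ⊆ fts G')) := by
  
  intro FitSc
  have hp3 : ∀ G : Set L, IsRegularFilter G → stf (fts G) = G := by
    rintro G ⟨F, _, rfl⟩
    rw [← stf_S F]
    exact stf_fitSl _
  refine ⟨?_, ?_, hp3, ?_, ?_⟩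
  · rintro G ⟨F, _, rfl⟩
    refine ⟨F, ?_⟩
    rw [← stf_S F]
    rfl
  · rintro T ⟨A, rfl⟩
    rw [show stf (fitSl {x : L | ∃ B ⊆ ⋃ a ∈ A, Set.Ici a, x = sInf B})
        = {x : L | ∀ a ∈ A, x ⊔ a = ⊤} from (stf_fitSl _).trans (stf_S A)]
    exact regular_of_A A
  · rintro T ⟨A, rfl⟩
    rw [show stf (fitSl {x : L | ∃ B ⊆ ⋃ a ∈ A, Set.Ici a, x = sInf B})
        = stf {x : L | ∃ B ⊆ ⋃ a ∈ A, Set.Ici a, x = sInf B} from stf_fitSl _]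
    rfl
  · intro G G' hG hG'
    constructor
    · intro h x hx
      exact Set.mem_iInter₂.mpr fun a ha => Set.mem_iInter₂.mp hx a (h ha)
    · intro h
      rw [← hp3 G hG, ← hp3 G' hG']
      exact fun a ha => h.trans ha
end
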